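/- Let f₁, f₂ : ℝⁿ → ℝ ∪ {+∞} be lower semicontinuous functions and u ∈ 𝕊, and assume the qualification condition ∂^∞f₁(∞;u) ∩ (−∂^∞f₂(∞;u)) = {0}. Then the pointwise maximum satisfies: ∂(max{f₁,f₂})(∞;u) ⊆ ⋃_{λ₁,λ₂ ∈ [0,1], λ₁+λ₂=1} (λ₁∘∂f₁(∞;u) + λ₂∘∂f₂(∞;u)), where λ∘∂f(∞;u) means λ·∂f(∞;u) if λ > 0 and ∂^∞f(∞;u) if λ = 0; moreover ∂^∞(max{f₁,f₂})(∞;u) ⊆ ∂^∞f₁(∞;u) + ∂^∞f₂(∞;u). -/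

import Mathlib

/-!
The epigraph of `max f₁ f₂` is `epi f₁ ∩ epi f₂`, so everything reduces to Fréchet normals to an
intersection of closed sets. The fuzzy intersection rule splits such a normal, up to an arbitrarily
small error, into normals to the two sets at nearby points; it comes from minimising
`-⟪w, a - q⟫ + c ‖a - q‖² + k ‖a - b‖²` over `S₁ × S₂` near `q` for a large penalty `k`.
Along `x_k →ᵘ ∞` this writes `w_k ≈ U₁_k + U₂_k` with `U_i_k` normal to `epi f_i`. Were
`(U₁_k, U₂_k)` unbounded, normalising would give a nonzero pair `(L, -L)` of limiting normals with
vanishing vertical part, i.e. a nonzero element of `∂^∞f₁(∞;u) ∩ -∂^∞f₂(∞;u)`. So a subsequence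
converges to `(L₁, L₂)`, and the vertical parts `-λ₁, -λ₂ ≤ 0` of the limits add up to `-1`
(resp. `0`).
-/

open Filter Topology Set
open scoped RealInnerProductSpace Pointwise

noncomputable section

/-- `ℝⁿ` with the Euclidean structure. -/
abbrev Eu (n : ℕ) := EuclideanSpace ℝ (Fin n)

/-- `x_k →ᵘ ∞` : `‖x_k‖ → ∞` and `x_k / ‖x_k‖ → u`. -/
def TendstoDirInfty {n : ℕ} (x : ℕ → Eu n) (u : Eu n) : Prop :=
  Tendsto (fun k => ‖x k‖) atTop atTop ∧
  Tendsto (fun k => ‖x k‖⁻¹ • x k) atTop (𝓝 u)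

/-- The Euclidean norm of `p ∈ ℝⁿ × ℝ`. -/
def pnorm {n : ℕ} (p : Eu n × ℝ) : ℝ := Real.sqrt (‖p.1‖ ^ 2 + p.2 ^ 2)

/-- The Euclidean inner product on `ℝⁿ × ℝ`. -/
def pinner {n : ℕ} (v p : Eu n × ℝ) : ℝ := ⟪v.1, p.1⟫ + v.2 * p.2

/-- The Fréchet (regular) normal cone to `S ⊆ ℝⁿ × ℝ` at `q` (empty when `q ∉ S`). -/
def frechetNCP {n : ℕ} (S : Set (Eu n × ℝ)) (q : Eu n × ℝ) : Set (Eu n × ℝ) :=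
  {w | q ∈ S ∧ ∀ ε > 0, ∃ δ > 0, ∀ p ∈ S, pnorm (p - q) < δ →
        pinner w (p - q) ≤ ε * pnorm (p - q)}

/-- Epigraph of `f : ℝⁿ → ℝ ∪ {+∞}`. -/
def epigraph {n : ℕ} (f : Eu n → EReal) : Set (Eu n × ℝ) := {p | f p.1 ≤ (p.2 : EReal)}

/-- The limiting subdifferential of `f` in direction `u` at infinity:
`ξ` with `(ξ_k, -s_k) ∈ N̂((x_k, r_k); epi f)`, `r_k ≥ f(x_k)`, `x_k →ᵘ ∞`,
`(ξ_k, -s_k) → (ξ, -1)`. -/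
def dirSubdiffInfty {n : ℕ} (f : Eu n → EReal) (u : Eu n) : Set (Eu n) :=
  {ξ | ∃ (x : ℕ → Eu n) (r : ℕ → ℝ) (w : ℕ → Eu n × ℝ),
      TendstoDirInfty x u ∧ (∀ k, f (x k) ≤ ((r k : ℝ) : EReal)) ∧
      (∀ k, w k ∈ frechetNCP (epigraph f) (x k, r k)) ∧
      Tendsto w atTop (𝓝 (ξ, (-1 : ℝ)))}

/-- The singular subdifferential of `f` in direction `u` at infinity. -/
def dirSingSubdiffInfty {n : ℕ} (f : Eu n → EReal) (u : Eu n) : Set (Eu n) :=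
  {ξ | ∃ (x : ℕ → Eu n) (r : ℕ → ℝ) (w : ℕ → Eu n × ℝ),
      TendstoDirInfty x u ∧ (∀ k, f (x k) ≤ ((r k : ℝ) : EReal)) ∧
      (∀ k, w k ∈ frechetNCP (epigraph f) (x k, r k)) ∧
      Tendsto w atTop (𝓝 (ξ, (0 : ℝ)))}

/-- `λ ∘ ∂f(∞; u)`: equals `λ • ∂f(∞; u)` for `λ ≠ 0` and `∂^∞f(∞; u)` for `λ = 0`. -/
def lamComp {n : ℕ} (l : ℝ) (f : Eu n → EReal) (u : Eu n) : Set (Eu n) :=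
  if l = 0 then dirSingSubdiffInfty f u else l • dirSubdiffInfty f u

theorem exists_penalized_minimizer_mem {X : Type*} [MetricSpace X] {K₁ K₂ U : Set X} {F : X → ℝ}
    {q : X} (hK₁ : IsCompact K₁) (hK₂ : IsCompact K₂) (hF : Continuous F) (hU : IsOpen U)
    (hq : q ∈ K₁ ∩ K₂) (hFU : ∀ x ∈ K₁ ∩ K₂, F x ≤ F q → x ∈ U) :
    ∃ c : ℝ, ∃ a ∈ K₁ ∩ U, ∃ b ∈ K₂ ∩ U,
      ∀ a' ∈ K₁, ∀ b' ∈ K₂, F a + c * dist a b ^ 2 ≤ F a' + c * dist a' b' ^ 2 := by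
  -- Minimisers of the penalised problems have `dist (m k).1 (m k).2 → 0`, so a cluster point lies
  -- in `K₁ ∩ K₂` with `F ≤ F q`, hence in `U`, and then so does some `m k`.
  set G : ℕ → X × X → ℝ := fun k p => F p.1 + (k + 1) * dist p.1 p.2 ^ 2
  have hK := hK₁.prod hK₂
  have hmin : ∀ k, ∃ m ∈ K₁ ×ˢ K₂, IsMinOn (G k) (K₁ ×ˢ K₂) m := fun k =>
    hK.exists_isMinOn ⟨(q, q), hq.1, hq.2⟩ (by fun_prop)
  choose m hmK hm using hmin
  obtain ⟨B, hB⟩ := (hK₁.image hF).bddBelow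
  have hFm : ∀ k, F (m k).1 + (k + 1) * dist (m k).1 (m k).2 ^ 2 ≤ F q := fun k => by
    simpa [G] using hm k (mk_mem_prod hq.1 hq.2)
  have hdist : ∀ k, dist (m k).1 (m k).2 ^ 2 ≤ (F q - B) / (k + 1) := fun k => by
    rw [le_div_iff₀ (by positivity)]
    linarith [hB ⟨_, (hmK k).1, rfl⟩, hFm k]
  obtain ⟨⟨a, b⟩, hab, φ, hφ, hmφ⟩ := hK.tendsto_subseq hmK
  have hdist0 : Tendsto (fun k => dist (m k).1 (m k).2 ^ 2) atTop (𝓝 0) :=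
    squeeze_zero (fun k => by positivity) hdist
      (tendsto_const_div_atTop_nhds_zero_nat (F q - B) |>.comp (tendsto_add_atTop_nat 1)
        |>.congr fun k => by simp)
  have hba : b = a := by
    have := tendsto_nhds_unique ((continuous_dist.pow 2).tendsto _ |>.comp hmφ)
      (hdist0.comp hφ.tendsto_atTop)
    simpa [eq_comm] using this
  subst hba
  have hFle : ∀ k, F (m k).1 ≤ F q := fun k => by
    have : 0 ≤ ((k : ℝ) + 1) * dist (m k).1 (m k).2 ^ 2 := by positivity
    linarith [hFm k]
  have haU : b ∈ U := hFU b ⟨hab.1, hab.2⟩ <|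
    le_of_tendsto ((hF.tendsto _).comp ((continuous_fst.tendsto _).comp hmφ))
      (Eventually.of_forall fun k => hFle (φ k))
  obtain ⟨k, hk⟩ := (hmφ.eventually ((hU.prod hU).mem_nhds ⟨haU, haU⟩)).exists
  exact ⟨φ k + 1, (m (φ k)).1, ⟨(hmK _).1, hk.1⟩, (m (φ k)).2, ⟨(hmK _).2, hk.2⟩,
    fun a' ha' b' hb' => hm (φ k) (mk_mem_prod ha' hb')⟩

section FrechetNormal

variable {E : Type*} [NormedAddCommGroup E] [InnerProductSpace ℝ E]

def frechetNormal (S : Set E) (q : E) : Set E :=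
  {w | q ∈ S ∧ ∀ ε > 0, ∃ δ > 0, ∀ p ∈ S, ‖p - q‖ < δ → ⟪w, p - q⟫ ≤ ε * ‖p - q‖}

theorem smul_mem_frechetNormal {S : Set E} {q w : E} {c : ℝ} (hc : 0 < c)
    (hw : w ∈ frechetNormal S q) : c • w ∈ frechetNormal S q := by
  refine ⟨hw.1, fun ε hε => ?_⟩
  obtain ⟨δ, hδ, hwδ⟩ := hw.2 (ε / c) (div_pos hε hc)
  refine ⟨δ, hδ, fun p hp hpq => ?_⟩
  calc ⟪c • w, p - q⟫ = c * ⟪w, p - q⟫ := real_inner_smul_left _ _ _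
    _ ≤ c * (ε / c * ‖p - q‖) := mul_le_mul_of_nonneg_left (hwδ p hp hpq) hc.le
    _ = ε * ‖p - q‖ := by field_simp

theorem inner_nonpos_of_mem_frechetNormal {S : Set E} {q w d : E} (hw : w ∈ frechetNormal S q)
    (hd : ∀ t : ℝ, 0 < t → q + t • d ∈ S) : ⟪w, d⟫ ≤ 0 := by
  by_contra! hpos
  set ε := ⟪w, d⟫ / (2 * (‖d‖ + 1))
  obtain ⟨δ, hδ, hwδ⟩ := hw.2 ε (by positivity)
  set t := δ / (‖d‖ + 1)
  have ht : 0 < t := by positivity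
  have hnorm : ‖q + t • d - q‖ = t * ‖d‖ := by
    rw [add_sub_cancel_left, norm_smul, Real.norm_of_nonneg ht.le]
  have htδ : t * ‖d‖ < δ := by
    have : t * (‖d‖ + 1) = δ := div_mul_cancel₀ δ (by positivity)
    nlinarith
  have key := hwδ _ (hd t ht) (hnorm ▸ htδ)
  rw [hnorm, add_sub_cancel_left, real_inner_smul_right] at key
  have hε : ε * ‖d‖ < ⟪w, d⟫ := by
    rw [div_mul_eq_mul_div, div_lt_iff₀ (by positivity)]
    nlinarith [norm_nonneg d]
  nlinarith

theorem mem_frechetNormal_of_inner_le_sq {S : Set E} {a v : E} {C : ℝ} (ha : a ∈ S)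
    (h : ∀ᶠ p in 𝓝 a, p ∈ S → ⟪v, p - a⟫ ≤ C * ‖p - a‖ ^ 2) : v ∈ frechetNormal S a := by
  refine ⟨ha, fun ε hε => ?_⟩
  obtain ⟨ρ, hρ, hball⟩ := Metric.eventually_nhds_iff.1 h
  refine ⟨min ρ (ε / (|C| + 1)), lt_min hρ (by positivity), fun p hp hpa => ?_⟩
  have hpa' : ‖p - a‖ * (|C| + 1) ≤ ε := by
    have := (lt_of_lt_of_le hpa (min_le_right _ _)).le
    rwa [le_div_iff₀ (by positivity)] at this
  calc ⟪v, p - a⟫ ≤ C * ‖p - a‖ ^ 2 :=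
        hball (by rw [dist_eq_norm]; exact lt_of_lt_of_le hpa (min_le_left _ _)) hp
    _ ≤ (|C| + 1) * ‖p - a‖ * ‖p - a‖ := by
        nlinarith [le_abs_self C, norm_nonneg (p - a)]
    _ ≤ ε * ‖p - a‖ := by nlinarith [norm_nonneg (p - a)]

theorem exists_frechetNormal_near_of_mem_frechetNormal_inter [ProperSpace E] {S₁ S₂ : Set E}
    (hS₁ : IsClosed S₁) (hS₂ : IsClosed S₂) {q w : E} (hw : w ∈ frechetNormal (S₁ ∩ S₂) q)
    {ε : ℝ} (hε : 0 < ε) :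
    ∃ p₁ p₂ v₁ v₂, v₁ ∈ frechetNormal S₁ p₁ ∧ v₂ ∈ frechetNormal S₂ p₂ ∧
      ‖p₁ - q‖ < ε ∧ ‖p₂ - q‖ < ε ∧ ‖w - v₁ - v₂‖ < ε := by
  obtain ⟨hq, hwq⟩ := hw
  obtain ⟨δ, hδ, hwδ⟩ := hwq (ε / 4) (by positivity)
  set ρ := min (δ / 2) ε
  have hρ : 0 < ρ := lt_min (by positivity) hε
  have hρδ : ρ < δ := (min_le_left _ _).trans_lt (by linarith)
  -- With this weight, `F x ≤ F q` forces `‖x - q‖ ≤ ρ / 2` on `S₁ ∩ S₂`, and the error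
  -- `2c ‖a - q‖` of the splitting stays below `ε`.
  set c := ε / (2 * ρ)
  have hc : 0 < c := by positivity
  have hcρ : c * ρ = ε / 2 := by simp only [c]; field_simp
  set F : E → ℝ := fun p => -⟪w, p - q⟫ + c * ‖p - q‖ ^ 2
  have hFU : ∀ x ∈ (S₁ ∩ Metric.closedBall q ρ) ∩ (S₂ ∩ Metric.closedBall q ρ),
      F x ≤ F q → x ∈ Metric.ball q ρ := by
    rintro x ⟨⟨hx₁, hxρ⟩, hx₂, -⟩ hFx
    rw [Metric.mem_closedBall, dist_eq_norm] at hxρ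
    rw [Metric.mem_ball, dist_eq_norm]
    by_contra! hρx
    have hinner := hwδ x ⟨hx₁, hx₂⟩ (hxρ.trans_lt hρδ)
    have : F q = 0 := by simp [F]
    have : c * ‖x - q‖ ^ 2 ≤ ε / 4 * ‖x - q‖ := by simp only [F] at hFx; linarith
    nlinarith [mul_le_mul_of_nonneg_left hρx (mul_nonneg hc.le (norm_nonneg (x - q)))]
  obtain ⟨k, a, ⟨⟨ha, haρ⟩, haq⟩, b, ⟨⟨hb, hbρ⟩, hbq⟩, hmin⟩ :=
    exists_penalized_minimizer_mem ((isCompact_closedBall q ρ).inter_left hS₁)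
      ((isCompact_closedBall q ρ).inter_left hS₂) (by fun_prop) Metric.isOpen_ball
      ⟨⟨hq.1, Metric.mem_closedBall_self hρ.le⟩, hq.2, Metric.mem_closedBall_self hρ.le⟩ hFU
  simp only [dist_eq_norm] at hmin
  have haq' : ‖a - q‖ < ρ := by rwa [Metric.mem_ball, dist_eq_norm] at haq
  have hbq' : ‖b - q‖ < ρ := by rwa [Metric.mem_ball, dist_eq_norm] at hbq
  refine ⟨a, b, w - (2 * k) • (a - b) - (2 * c) • (a - q), (2 * k) • (a - b), ?_, ?_,
    haq'.trans_le (min_le_right _ _), hbq'.trans_le (min_le_right _ _), ?_⟩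
  · refine mem_frechetNormal_of_inner_le_sq (C := c + k) ha ?_
    filter_upwards [Metric.isOpen_ball.mem_nhds haq] with p hp hpS
    have := hmin p ⟨hpS, Metric.ball_subset_closedBall hp⟩ b ⟨hb, hbρ⟩
    have e₁ : p - q = (a - q) + (p - a) := by abel
    have e₂ : p - b = (a - b) + (p - a) := by abel
    simp only [F, e₁, e₂, norm_add_sq_real, inner_add_right] at this
    rw [inner_sub_left, inner_sub_left, real_inner_smul_left, real_inner_smul_left]
    linarith
  · refine mem_frechetNormal_of_inner_le_sq (C := k) hb ?_
    filter_upwards [Metric.isOpen_ball.mem_nhds hbq] with p hp hpS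
    have := hmin a ⟨ha, haρ⟩ p ⟨hpS, Metric.ball_subset_closedBall hp⟩
    have e : a - p = (a - b) - (p - b) := by abel
    rw [e, norm_sub_sq_real (a - b)] at this
    rw [real_inner_smul_left]
    linarith
  · have : w - (w - (2 * k) • (a - b) - (2 * c) • (a - q)) - (2 * k) • (a - b)
        = (2 * c) • (a - q) := by abel
    rw [this, norm_smul, Real.norm_of_nonneg (by positivity)]
    nlinarith [haq']

end FrechetNormal

section RescaledLimits

variable {V : Type*} [NormedAddCommGroup V] [NormedSpace ℝ V]

def rescaledSubseqLimits (U : ℕ → V) : Set V :=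
  {L | ∃ (φ : ℕ → ℕ) (c : ℕ → ℝ), StrictMono φ ∧ (∀ k, 0 < c k) ∧
    Tendsto (fun k => c k • U (φ k)) atTop (𝓝 L)}

variable [ProperSpace V] {C₁ C₂ : Set V} {U₁ U₂ : ℕ → V} {L : V}

theorem not_tendsto_norm_add_norm_atTop (hC : C₁ ∩ -C₂ ⊆ {0})
    (hU : Tendsto (fun k => U₁ k + U₂ k) atTop (𝓝 L))
    (h₁ : rescaledSubseqLimits U₁ ⊆ C₁) (h₂ : rescaledSubseqLimits U₂ ⊆ C₂) :
    ¬Tendsto (fun k => ‖U₁ k‖ + ‖U₂ k‖ + 1) atTop atTop := by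
  intro hm
  set m : ℕ → ℝ := fun k => ‖U₁ k‖ + ‖U₂ k‖ + 1
  have hm0 : ∀ k, 0 < (m k)⁻¹ := fun k => by positivity
  have hnorm : ∀ k, ‖(m k)⁻¹ • U₁ k‖ + ‖(m k)⁻¹ • U₂ k‖ = 1 - (m k)⁻¹ := fun k => by
    rw [norm_smul, norm_smul, Real.norm_of_nonneg (hm0 k).le]
    simp only [m]
    field_simp
    ring
  have hbdd : ∀ k, ((m k)⁻¹ • U₁ k, (m k)⁻¹ • U₂ k) ∈ Metric.closedBall (0 : V × V) 1 :=
    fun k => by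
      rw [mem_closedBall_zero_iff, Prod.norm_mk, max_le_iff]
      constructor <;> linarith [hnorm k, hm0 k, norm_nonneg ((m k)⁻¹ • U₁ k),
        norm_nonneg ((m k)⁻¹ • U₂ k)]
  obtain ⟨⟨L₁, L₂⟩, -, φ, hφ, hlim⟩ := tendsto_subseq_of_bounded Metric.isBounded_closedBall hbdd
  have hlim₁ := (continuous_fst.tendsto _).comp hlim
  have hlim₂ := (continuous_snd.tendsto _).comp hlim
  have hL₁ : L₁ ∈ C₁ := h₁ ⟨φ, _, hφ, fun k => hm0 (φ k), hlim₁⟩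
  have hL₂ : L₂ ∈ C₂ := h₂ ⟨φ, _, hφ, fun k => hm0 (φ k), hlim₂⟩
  have hinv : Tendsto (fun k => (m (φ k))⁻¹) atTop (𝓝 0) :=
    (hm.comp hφ.tendsto_atTop).inv_tendsto_atTop
  have hsum : L₁ + L₂ = 0 := by
    refine tendsto_nhds_unique (hlim₁.add hlim₂) ?_
    simpa [smul_add] using hinv.smul (hU.comp hφ.tendsto_atTop)
  have hL₁0 : L₁ = 0 := hC ⟨hL₁, by rwa [Set.mem_neg, neg_eq_of_add_eq_zero_right hsum]⟩
  have hL₂0 : L₂ = 0 := by rwa [hL₁0, zero_add] at hsum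
  have hone : ‖L₁‖ + ‖L₂‖ = 1 := by
    refine tendsto_nhds_unique (hlim₁.norm.add hlim₂.norm) ?_
    simpa [Function.comp_def, hnorm] using (tendsto_const_nhds (x := (1 : ℝ))).sub hinv
  simp [hL₁0, hL₂0] at hone

theorem mem_add_of_tendsto_add (hC : C₁ ∩ -C₂ ⊆ {0})
    (hU : Tendsto (fun k => U₁ k + U₂ k) atTop (𝓝 L))
    (h₁ : rescaledSubseqLimits U₁ ⊆ C₁) (h₂ : rescaledSubseqLimits U₂ ⊆ C₂) :
    L ∈ C₁ + C₂ := by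
  obtain ⟨M, hM⟩ : ∃ M : ℝ, ∃ᶠ k in atTop, ‖U₁ k‖ + ‖U₂ k‖ + 1 < M := by
    simpa only [tendsto_atTop, not_forall, not_eventually, not_le] using
      not_tendsto_norm_add_norm_atTop hC hU h₁ h₂
  have hfreq : ∃ᶠ k in atTop, (U₁ k, U₂ k) ∈ Metric.closedBall (0 : V × V) M :=
    hM.mono fun k hk => by
      rw [mem_closedBall_zero_iff, Prod.norm_mk, max_le_iff]
      constructor <;> linarith [norm_nonneg (U₁ k), norm_nonneg (U₂ k)]
  obtain ⟨⟨L₁, L₂⟩, -, φ, hφ, hlim⟩ :=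
    tendsto_subseq_of_frequently_bounded Metric.isBounded_closedBall hfreq
  have hlim₁ := (continuous_fst.tendsto _).comp hlim
  have hlim₂ := (continuous_snd.tendsto _).comp hlim
  refine ⟨L₁, h₁ ⟨φ, 1, hφ, fun _ => one_pos, by simpa [Function.comp_def] using hlim₁⟩,
    L₂, h₂ ⟨φ, 1, hφ, fun _ => one_pos, by simpa [Function.comp_def] using hlim₂⟩, ?_⟩
  exact tendsto_nhds_unique (hlim₁.add hlim₂) (hU.comp hφ.tendsto_atTop)

end RescaledLimits

section EpigraphNormals

variable {n : ℕ}

def toL2 : (Eu n × ℝ) ≃L[ℝ] WithLp 2 (Eu n × ℝ) :=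
  (WithLp.prodContinuousLinearEquiv 2 ℝ (Eu n) ℝ).symm

theorem pnorm_eq_norm_toL2 (p : Eu n × ℝ) : pnorm p = ‖toL2 p‖ := by
  simp [pnorm, toL2, WithLp.prod_norm_eq_of_L2]

theorem pinner_eq_inner_toL2 (v p : Eu n × ℝ) : pinner v p = ⟪toL2 v, toL2 p⟫ := by
  simp [pinner, toL2, mul_comm]

theorem mem_frechetNCP_iff {S : Set (Eu n × ℝ)} {q w : Eu n × ℝ} :
    w ∈ frechetNCP S q ↔ toL2 w ∈ frechetNormal (toL2.symm ⁻¹' S) (toL2 q) := by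
  simp only [frechetNCP, frechetNormal, mem_ofPred_eq, mem_preimage, toL2.surjective.forall,
    ContinuousLinearEquiv.symm_apply_apply, ← map_sub, pnorm_eq_norm_toL2, pinner_eq_inner_toL2]

theorem smul_mem_frechetNCP {S : Set (Eu n × ℝ)} {q w : Eu n × ℝ} {c : ℝ} (hc : 0 < c)
    (hw : w ∈ frechetNCP S q) : c • w ∈ frechetNCP S q := by
  rw [mem_frechetNCP_iff, map_smul]
  exact smul_mem_frechetNormal hc (mem_frechetNCP_iff.1 hw)

theorem exists_seq_frechetNCP_of_mem_frechetNCP_inter {S₁ S₂ : Set (Eu n × ℝ)}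
    (hS₁ : IsClosed S₁) (hS₂ : IsClosed S₂) {q w : ℕ → Eu n × ℝ}
    (hw : ∀ k, w k ∈ frechetNCP (S₁ ∩ S₂) (q k)) :
    ∃ p₁ p₂ v₁ v₂ : ℕ → Eu n × ℝ, (∀ k, v₁ k ∈ frechetNCP S₁ (p₁ k)) ∧
      (∀ k, v₂ k ∈ frechetNCP S₂ (p₂ k)) ∧ Tendsto (fun k => p₁ k - q k) atTop (𝓝 0) ∧
      Tendsto (fun k => p₂ k - q k) atTop (𝓝 0) ∧
      Tendsto (fun k => w k - v₁ k - v₂ k) atTop (𝓝 0) := by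
  have hfuzzy := fun k : ℕ => exists_frechetNormal_near_of_mem_frechetNormal_inter
    (hS₁.preimage toL2.symm.continuous) (hS₂.preimage toL2.symm.continuous)
    (mem_frechetNCP_iff.1 (hw k)) (Nat.one_div_pos_of_nat (n := k))
  choose P₁ P₂ V₁ V₂ hV₁ hV₂ hP₁ hP₂ hV using hfuzzy
  have hlim {z : ℕ → WithLp 2 (Eu n × ℝ)} (hz : ∀ k, ‖z k‖ < 1 / ((k : ℝ) + 1)) :
      Tendsto (fun k => toL2.symm (z k)) atTop (𝓝 0) := by
    rw [← map_zero toL2.symm]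
    refine (toL2.symm.continuous.tendsto 0).comp (tendsto_zero_iff_norm_tendsto_zero.2 ?_)
    exact squeeze_zero (fun k => norm_nonneg _) (fun k => (hz k).le)
      tendsto_one_div_add_atTop_nhds_zero_nat
  refine ⟨fun k => toL2.symm (P₁ k), fun k => toL2.symm (P₂ k), fun k => toL2.symm (V₁ k),
    fun k => toL2.symm (V₂ k), fun k => ?_, fun k => ?_, ?_, ?_, ?_⟩
  · simpa [mem_frechetNCP_iff] using hV₁ k
  · simpa [mem_frechetNCP_iff] using hV₂ k
  · simpa using hlim hP₁
  · simpa using hlim hP₂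
  · simpa using hlim hV

theorem isClosed_epigraph {f : Eu n → EReal} (hf : LowerSemicontinuous f) :
    IsClosed (epigraph f) :=
  hf.isClosed_epigraph.preimage
    (continuous_fst.prodMk (continuous_coe_real_ereal.comp continuous_snd))

theorem epigraph_max (f₁ f₂ : Eu n → EReal) :
    epigraph (fun x => max (f₁ x) (f₂ x)) = epigraph f₁ ∩ epigraph f₂ := by
  ext p
  simp [epigraph]

theorem snd_nonpos_of_mem_frechetNCP_epigraph {f : Eu n → EReal} {q w : Eu n × ℝ}
    (hw : w ∈ frechetNCP (epigraph f) q) : w.2 ≤ 0 := by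
  have hup : ∀ t : ℝ, 0 < t → toL2 q + t • toL2 (0, 1) ∈ toL2.symm ⁻¹' epigraph f := by
    intro t ht
    have : f q.1 ≤ ((q.2 + t : ℝ) : EReal) := hw.1.trans (EReal.coe_le_coe_iff.2 (by linarith))
    simpa [epigraph] using this
  have h := inner_nonpos_of_mem_frechetNormal (mem_frechetNCP_iff.1 hw) hup
  rw [← pinner_eq_inner_toL2] at h
  simpa [pinner] using h

namespace TendstoDirInfty

variable {x y : ℕ → Eu n} {u : Eu n}

theorem comp_strictMono (hx : TendstoDirInfty x u) {φ : ℕ → ℕ} (hφ : StrictMono φ) :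
    TendstoDirInfty (x ∘ φ) u :=
  ⟨hx.1.comp hφ.tendsto_atTop, hx.2.comp hφ.tendsto_atTop⟩

theorem norm_eq_one (hx : TendstoDirInfty x u) : ‖u‖ = 1 := by
  refine tendsto_nhds_unique hx.2.norm (tendsto_const_nhds.congr' ?_)
  filter_upwards [hx.1.eventually_gt_atTop 0] with k hk
  rw [norm_smul, norm_inv, norm_norm, inv_mul_cancel₀ hk.ne']

theorem of_tendsto_sub (hx : TendstoDirInfty x u)
    (hyx : Tendsto (fun k => y k - x k) atTop (𝓝 0)) : TendstoDirInfty y u := by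
  have hx0 : ∀ᶠ k in atTop, ‖x k‖ ≠ 0 := (hx.1.eventually_gt_atTop 0).mono fun _ h => h.ne'
  have hdir : Tendsto (fun k => ‖x k‖⁻¹ • y k) atTop (𝓝 u) := by
    have := hx.2.add (hx.1.inv_tendsto_atTop.smul hyx)
    rw [zero_smul, add_zero] at this
    exact this.congr fun k => by simp only [Pi.inv_apply, ← smul_add, add_sub_cancel]
  have hratio : Tendsto (fun k => ‖x k‖⁻¹ * ‖y k‖) atTop (𝓝 1) := by
    rw [← hx.norm_eq_one]
    exact hdir.norm.congr fun k => by rw [norm_smul, norm_inv, norm_norm]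
  refine ⟨(hratio.pos_mul_atTop one_pos hx.1).congr' ?_, ?_⟩
  · filter_upwards [hx0] with k hk
    rw [mul_comm, ← mul_assoc, mul_inv_cancel₀ hk, one_mul]
  · have := (hratio.inv₀ one_ne_zero).smul hdir
    rw [inv_one, one_smul] at this
    refine this.congr' ?_
    filter_upwards [hx0] with k hk
    rw [smul_smul, mul_inv, inv_inv, mul_comm, inv_mul_cancel_left₀ hk]

end TendstoDirInfty

def epiNormalConeInfty (f : Eu n → EReal) (u : Eu n) : Set (Eu n × ℝ) :=
  {v | ∃ (x : ℕ → Eu n) (r : ℕ → ℝ) (w : ℕ → Eu n × ℝ),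
      TendstoDirInfty x u ∧ (∀ k, f (x k) ≤ ((r k : ℝ) : EReal)) ∧
      (∀ k, w k ∈ frechetNCP (epigraph f) (x k, r k)) ∧ Tendsto w atTop (𝓝 v)}

section epiNormalConeInfty

variable {f : Eu n → EReal} {u : Eu n}

theorem mem_dirSubdiffInfty_iff {ξ : Eu n} :
    ξ ∈ dirSubdiffInfty f u ↔ (ξ, -1) ∈ epiNormalConeInfty f u :=
  Iff.rfl

theorem mem_dirSingSubdiffInfty_iff {ξ : Eu n} :
    ξ ∈ dirSingSubdiffInfty f u ↔ (ξ, 0) ∈ epiNormalConeInfty f u :=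
  Iff.rfl

theorem snd_nonpos_of_mem_epiNormalConeInfty {v : Eu n × ℝ} (hv : v ∈ epiNormalConeInfty f u) :
    v.2 ≤ 0 := by
  obtain ⟨x, r, w, -, -, hw, hwv⟩ := hv
  exact le_of_tendsto ((continuous_snd.tendsto v).comp hwv)
    (Eventually.of_forall fun k => snd_nonpos_of_mem_frechetNCP_epigraph (hw k))

theorem smul_mem_epiNormalConeInfty {v : Eu n × ℝ} {c : ℝ} (hc : 0 < c)
    (hv : v ∈ epiNormalConeInfty f u) : c • v ∈ epiNormalConeInfty f u := by
  obtain ⟨x, r, w, hx, hr, hw, hwv⟩ := hv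
  exact ⟨x, r, fun k => c • w k, hx, hr, fun k => smul_mem_frechetNCP hc (hw k), hwv.const_smul c⟩

theorem mem_epiNormalConeInfty_of_tendsto {x : ℕ → Eu n} {r : ℕ → ℝ} {p w : ℕ → Eu n × ℝ}
    {v : Eu n × ℝ} (hx : TendstoDirInfty x u)
    (hpx : Tendsto (fun k => p k - (x k, r k)) atTop (𝓝 0))
    (hw : ∀ k, w k ∈ frechetNCP (epigraph f) (p k)) (hwv : Tendsto w atTop (𝓝 v)) :
    v ∈ epiNormalConeInfty f u :=
  ⟨fun k => (p k).1, fun k => (p k).2, w,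
    hx.of_tendsto_sub (by simpa [Function.comp_def] using (continuous_fst.tendsto 0).comp hpx),
    fun k => (hw k).1, hw, hwv⟩

theorem mem_lamComp_of_mem_epiNormalConeInfty {ξ : Eu n} {s : ℝ}
    (hv : (ξ, s) ∈ epiNormalConeInfty f u) : ξ ∈ lamComp (-s) f u := by
  unfold lamComp
  split_ifs with h
  · rwa [neg_eq_zero.1 h] at hv
  · have hl : 0 < -s := (neg_nonneg.2 (snd_nonpos_of_mem_epiNormalConeInfty hv)).lt_of_ne' h
    refine ⟨(-s)⁻¹ • ξ, mem_dirSubdiffInfty_iff.2 ?_, smul_inv_smul₀ h _⟩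
    have hs : (-s)⁻¹ * s = -1 := by rw [inv_neg, neg_mul, inv_mul_cancel₀ (neg_ne_zero.1 h)]
    have := smul_mem_epiNormalConeInfty (inv_pos.2 hl) hv
    rwa [Prod.smul_mk, smul_eq_mul, hs] at this

end epiNormalConeInfty

theorem epiNormalConeInfty_inter_neg_subset {f₁ f₂ : Eu n → EReal} {u : Eu n}
    (hqc : dirSingSubdiffInfty f₁ u ∩ -dirSingSubdiffInfty f₂ u ⊆ {0}) :
    epiNormalConeInfty f₁ u ∩ -epiNormalConeInfty f₂ u ⊆ {0} := by
  rintro ⟨ξ, s⟩ ⟨h₁, h₂⟩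
  rw [Set.mem_neg, Prod.neg_mk] at h₂
  have hs : s = 0 := le_antisymm (snd_nonpos_of_mem_epiNormalConeInfty h₁)
    (neg_nonpos.1 (snd_nonpos_of_mem_epiNormalConeInfty h₂))
  subst hs
  rw [neg_zero] at h₂
  have hξ : ξ = 0 := hqc ⟨h₁, by rwa [Set.mem_neg, mem_dirSingSubdiffInfty_iff]⟩
  simp [hξ]

theorem epiNormalConeInfty_max_subset {f₁ f₂ : Eu n → EReal} {u : Eu n}
    (hf₁ : LowerSemicontinuous f₁) (hf₂ : LowerSemicontinuous f₂)
    (hqc : dirSingSubdiffInfty f₁ u ∩ -dirSingSubdiffInfty f₂ u ⊆ {0}) :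
    epiNormalConeInfty (fun x => max (f₁ x) (f₂ x)) u ⊆
      epiNormalConeInfty f₁ u + epiNormalConeInfty f₂ u := by
  rintro v ⟨x, r, w, hx, -, hw, hwv⟩
  rw [epigraph_max] at hw
  obtain ⟨p₁, p₂, U₁, U₂, hU₁, hU₂, hp₁, hp₂, hwU⟩ :=
    exists_seq_frechetNCP_of_mem_frechetNCP_inter (isClosed_epigraph hf₁) (isClosed_epigraph hf₂) hw
  have hU : Tendsto (fun k => U₁ k + U₂ k) atTop (𝓝 v) := by
    simpa [sub_sub, sub_sub_cancel] using hwv.sub hwU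
  refine mem_add_of_tendsto_add (epiNormalConeInfty_inter_neg_subset hqc) hU ?_ ?_
  · rintro L ⟨φ, c, hφ, hc, hL⟩
    exact mem_epiNormalConeInfty_of_tendsto (hx.comp_strictMono hφ) (hp₁.comp hφ.tendsto_atTop)
      (fun k => smul_mem_frechetNCP (hc k) (hU₁ (φ k))) hL
  · rintro L ⟨φ, c, hφ, hc, hL⟩
    exact mem_epiNormalConeInfty_of_tendsto (hx.comp_strictMono hφ) (hp₂.comp hφ.tendsto_atTop)
      (fun k => smul_mem_frechetNCP (hc k) (hU₂ (φ k))) hL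

end EpigraphNormals

theorem dirSubdiffInfty_max_rule_general {n : ℕ} (f₁ f₂ : Eu n → EReal)
    (hf₁ : LowerSemicontinuous f₁) (hf₂ : LowerSemicontinuous f₂)
    (u : Eu n)
    (hqc : dirSingSubdiffInfty f₁ u ∩ -dirSingSubdiffInfty f₂ u = {0}) :
    (dirSubdiffInfty (fun x => max (f₁ x) (f₂ x)) u ⊆
      ⋃ (l : ℝ) (_ : 0 ≤ l ∧ l ≤ 1), (lamComp l f₁ u + lamComp (1 - l) f₂ u)) ∧
    dirSingSubdiffInfty (fun x => max (f₁ x) (f₂ x)) u ⊆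
      dirSingSubdiffInfty f₁ u + dirSingSubdiffInfty f₂ u := by
  have hmax := epiNormalConeInfty_max_subset hf₁ hf₂ hqc.subset
  constructor
  · intro ξ hξ
    obtain ⟨⟨ξ₁, s₁⟩, h₁, ⟨ξ₂, s₂⟩, h₂, hsum⟩ := hmax hξ
    obtain ⟨rfl, hs⟩ := Prod.mk.inj hsum
    have hs₁ := snd_nonpos_of_mem_epiNormalConeInfty h₁
    have hs₂ := snd_nonpos_of_mem_epiNormalConeInfty h₂
    refine mem_iUnion₂.2 ⟨-s₁, ⟨by linarith, by linarith⟩, ξ₁,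
      mem_lamComp_of_mem_epiNormalConeInfty h₁, ξ₂, ?_, rfl⟩
    rw [show 1 - -s₁ = -s₂ by linarith]
    exact mem_lamComp_of_mem_epiNormalConeInfty h₂
  · intro ξ hξ
    obtain ⟨⟨ξ₁, s₁⟩, h₁, ⟨ξ₂, s₂⟩, h₂, hsum⟩ := hmax hξ
    obtain ⟨rfl, hs⟩ := Prod.mk.inj hsum
    have hs₁ : s₁ = 0 := by
      linarith [snd_nonpos_of_mem_epiNormalConeInfty h₁, snd_nonpos_of_mem_epiNormalConeInfty h₂]
    have hs₂ : s₂ = 0 := by linarith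
    subst hs₁ hs₂
    exact ⟨ξ₁, h₁, ξ₂, h₂, rfl⟩

/-- Maximum rule for directional subdifferentials at infinity. -/
theorem dirSubdiffInfty_max_rule {n : ℕ} (f₁ f₂ : Eu n → EReal)
    (hf₁ : LowerSemicontinuous f₁) (hf₂ : LowerSemicontinuous f₂)
    (hb₁ : ∀ x, f₁ x ≠ ⊥) (hb₂ : ∀ x, f₂ x ≠ ⊥)
    (u : Eu n) (hu1 : ‖u‖ = 1)
    (hqc : dirSingSubdiffInfty f₁ u ∩ -dirSingSubdiffInfty f₂ u = {0}) :
    (dirSubdiffInfty (fun x => max (f₁ x) (f₂ x)) u ⊆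
      ⋃ (l : ℝ) (_ : 0 ≤ l ∧ l ≤ 1), (lamComp l f₁ u + lamComp (1 - l) f₂ u)) ∧
    dirSingSubdiffInfty (fun x => max (f₁ x) (f₂ x)) u ⊆
      dirSingSubdiffInfty f₁ u + dirSingSubdiffInfty f₂ u :=
  dirSubdiffInfty_max_rule_general f₁ f₂ hf₁ hf₂ u hqc
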